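/- arXiv:2305.14286 — 3 statements merged into one kernel-verified Lean document; each statement's English description precedes it below -/
import Mathlib

section
/- Let f : X → X be G-equivariant, let p(z|h) satisfy the latent-equivariance condition p(ρ(g)z | ρ(g)h) = p(z|h), and let q(x'|z,h) satisfy q(x'|z,h) = q(ρ(g)x' | ρ(g)z, ρ(g)h). Assume additionally that |det ρ(g)| = 1 for all g ∈ G (acting on the latent space Z). Then the marginal transition density P(x'|x) = ∫_z q(x'|z, f(x)) p(z|f(x)) dz is G-equivariant: P(ρ(g)x' | ρ(g)x) = P(x'|x). -/
open MeasureTheory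

/-- Equivariant-latent case: if the forward model `f` is `G`-equivariant, the conditional prior
satisfies `p(ρ(g)z | ρ(g)h) = p(z|h)`, the decoder satisfies
`q(x'|z,h) = q(ρ(g)x' | ρ(g)z, ρ(g)h)`, and `|det ρ(g)| = 1` on the latent space, then the
marginal transition density `P(x'|x) = ∫ q(x'|z,f(x)) p(z|f(x)) dz` is `G`-equivariant. -/
theorem marginal_transition_equivariant_equivariant_latent
    {G : Type*} [Group G] (n m : ℕ)
    (ρ : G →* ((Fin n → ℝ) ≃ₗ[ℝ] (Fin n → ℝ)))
    (ρZ : G →* ((Fin m → ℝ) ≃ₗ[ℝ] (Fin m → ℝ)))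
    (hdet : ∀ g : G, |LinearMap.det (ρZ g).toLinearMap| = 1)
    (f : (Fin n → ℝ) → (Fin n → ℝ))
    (p : (Fin n → ℝ) → (Fin m → ℝ) → ℝ)
    (q : (Fin m → ℝ) → (Fin n → ℝ) → (Fin n → ℝ) → ℝ)
    (hmeas : ∀ x x', Measurable (fun z => q z (f x) x' * p (f x) z))
    (hf : ∀ (g : G) x, f (ρ g x) = ρ g (f x))
    (hp : ∀ (g : G) h z, p (ρ g h) (ρZ g z) = p h z)
    (hq : ∀ (g : G) z h x', q z h x' = q (ρZ g z) (ρ g h) (ρ g x')) :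
    ∀ (g : G) x x',
      (∫ z, q z (f (ρ g x)) (ρ g x') * p (f (ρ g x)) z) =
        ∫ z, q z (f x) x' * p (f x) z := by
  intro g x x'
  have hdet0 : LinearMap.det (ρZ g).toLinearMap ≠ 0 := by
    intro h
    have h1 := hdet g
    rw [h] at h1; simp at h1
  have hmap : Measure.map (ρZ g) (volume : Measure (Fin m → ℝ)) = volume := by
    have := Real.map_linearMap_volume_pi_eq_smul_volume_pi (f := (ρZ g).toLinearMap) hdet0
    rw [abs_inv, hdet g] at this
    simpa using this
  have hmp : MeasurePreserving (ρZ g) (volume : Measure (Fin m → ℝ)) volume :=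
    ⟨(ρZ g).toLinearMap.continuous_of_finiteDimensional.measurable, hmap⟩
  have hemb : MeasurableEmbedding (ρZ g) :=
    ((ρZ g).toContinuousLinearEquiv.toHomeomorph.toMeasurableEquiv).measurableEmbedding
  have key := hmp.integral_comp hemb
    (fun z => q z (f (ρ g x)) (ρ g x') * p (f (ρ g x)) z)
  rw [← key]
  congr 1
  funext z
  rw [hf, hp, ← hq]
end

section
/- If a conditional density family p(z|h) on ℝᵐ satisfies the equivariance condition p(ρ(g)z | ρ(g)h) = p(z|h) for all g ∈ G, where each z ↦ p(z|h) integrates to 1, and ρ(g) acts invertibly and linearly on both z and h, then |det ρ(g)|_Z = 1, where ρ(g)_Z denotes the action on the latent space Z. -/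
open MeasureTheory

/-- Specialization of the determinant lemma to the latent conditional prior: if a family of
probability densities `p(·|h)` on the latent space `Z = ℝᵐ` satisfies the equivariance condition
`p(ρ(g)z | ρ(g)h) = p(z|h)` for linear representations of `G` on `H` and `Z`, then the
determinant of the latent action has absolute value 1. -/
theorem latent_prior_det_eq_one {G : Type*} [Group G]
    {H : Type*} [AddCommGroup H] [Module ℝ H] (m : ℕ)
    (ρH : G →* (H ≃ₗ[ℝ] H))
    (ρZ : G →* ((Fin m → ℝ) ≃ₗ[ℝ] (Fin m → ℝ)))
    (p : H → (Fin m → ℝ) → ℝ)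
    (hmeas : ∀ h, Measurable (p h))
    (hnonneg : ∀ h z, 0 ≤ p h z)
    (hnorm : ∀ h, ∫ z, p h z = 1)
    (hequiv : ∀ (g : G) h z, p (ρH g h) (ρZ g z) = p h z) :
    ∀ g : G, |LinearMap.det (ρZ g).toLinearMap| = 1 := by
  intro g
  set T : (Fin m → ℝ) →ₗ[ℝ] (Fin m → ℝ) := (ρZ g).toLinearMap with hT
  have hd : LinearMap.det T ≠ 0 := (LinearEquiv.isUnit_det' (ρZ g)).ne_zero
  have hmap : Measure.map T volume = ENNReal.ofReal |(LinearMap.det T)⁻¹| • volume :=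
    Measure.map_linearMap_addHaar_eq_smul_addHaar _ hd
  have hTmeas : Measurable T := T.continuous_of_finiteDimensional.measurable
  have key : ∫ z, p (ρH g 0) z ∂(Measure.map T volume) = ∫ z, p (ρH g 0) (T z) :=
    integral_map hTmeas.aemeasurable (hmeas _).aestronglyMeasurable
  have h1 : ∫ z, p (ρH g 0) (T z) = 1 := by
    have : ∀ z, p (ρH g 0) (T z) = p 0 z := fun z => hequiv g 0 z
    simp_rw [this]
    exact hnorm 0
  rw [hmap, integral_smul_measure, hnorm, h1, smul_eq_mul, mul_one,
    ENNReal.toReal_ofReal (abs_nonneg _)] at key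
  have : |LinearMap.det T|⁻¹ = 1 := by rwa [abs_inv] at key
  rwa [inv_eq_one] at this
end

section
/- Suppose a one-step transition density p(x'|x) is G-equivariant and the initial distribution p₀(x⁰) is G-invariant (p₀(ρ(g)x) = p₀(x)). If |det ρ(g)| = 1 for all g, then the marginal distribution at every time t, defined by p_t(x^t) = ∫ p(x^t | x^{t-1}) p_{t-1}(x^{t-1}) dx^{t-1}, is G-invariant for all t ≥ 0. -/
open MeasureTheory

/-- The marginal density at time `t`, obtained from the initial density `p₀` by repeatedly
applying the one-step transition density `p` ("p x y = p(y|x)"):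
`p_t(x^t) = ∫ p(x^t | x^{t-1}) p_{t-1}(x^{t-1}) dx^{t-1}`. -/
noncomputable def marginalAt {n : ℕ} (p : (Fin n → ℝ) → (Fin n → ℝ) → ℝ)
    (p₀ : (Fin n → ℝ) → ℝ) : ℕ → (Fin n → ℝ) → ℝ
  | 0, x => p₀ x
  | (t + 1), x => ∫ w, p w x * marginalAt p p₀ t w

/-- Equivariant dynamics propagate invariant marginals: if the one-step transition density is
`G`-equivariant, the initial density is `G`-invariant, and `|det ρ(g)| = 1` for all `g`, then
the marginal density at every time `t` is `G`-invariant. -/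
theorem marginals_invariant {G : Type*} [Group G] (n : ℕ)
    (ρ : G →* ((Fin n → ℝ) ≃ₗ[ℝ] (Fin n → ℝ)))
    (p : (Fin n → ℝ) → (Fin n → ℝ) → ℝ)
    (p₀ : (Fin n → ℝ) → ℝ)
    (hmeas : Measurable (Function.uncurry p))
    (hmeas₀ : Measurable p₀)
    (hequiv : ∀ (g : G) x y, p (ρ g x) (ρ g y) = p x y)
    (hinv : ∀ (g : G) x, p₀ (ρ g x) = p₀ x)
    (hdet : ∀ g : G, |LinearMap.det (ρ g).toLinearMap| = 1) :
    ∀ (t : ℕ) (g : G) (x : Fin n → ℝ),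
      marginalAt p p₀ t (ρ g x) = marginalAt p p₀ t x := by
  have hmp : ∀ g : G, MeasurePreserving (ρ g) (volume : Measure (Fin n → ℝ)) volume := by
    intro g
    have hdne : LinearMap.det (ρ g).toLinearMap ≠ 0 := by
      intro h; have h2 := hdet g; rw [h] at h2; simp at h2
    refine ⟨(ρ g).toContinuousLinearEquiv.continuous.measurable, ?_⟩
    have := Measure.map_linearMap_addHaar_eq_smul_addHaar
      (volume : Measure (Fin n → ℝ)) hdne
    have habs : |(LinearMap.det (ρ g).toLinearMap)⁻¹| = 1 := by
      rw [abs_inv, hdet g]; norm_num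
    simpa [habs] using this
  have hemb : ∀ g : G, MeasurableEmbedding (ρ g) := fun g =>
    (ρ g).toContinuousLinearEquiv.toHomeomorph.measurableEmbedding
  intro t
  induction t with
  | zero => intro g x; exact hinv g x
  | succ t ih =>
    intro g x
    show (∫ w, p w (ρ g x) * marginalAt p p₀ t w)
        = ∫ w, p w x * marginalAt p p₀ t w
    rw [← MeasurePreserving.integral_comp (hmp g) (hemb g)
      (fun w => p w (ρ g x) * marginalAt p p₀ t w)]
    congr 1
    ext w
    rw [hequiv g w x, ih g w]
end
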